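/- Let d ≥ 1, let Ω ⊆ ℝ^d be a nonempty bounded open set, let ε > 0 and 0 < k ≤ 2ε², and fix w ∈ V. Then the modified Crank–Nicolson discrete energy E(u) = (1/2)∫_Ω |(∇u(x) + ∇w(x))/2|² dx + (1/(4k))∫_Ω (u(x) − w(x))² dx + (1/(2ε²))∫_Ω Ǧ(u(x); w(x)) dx is strictly convex on V: for all u₁, u₂ ∈ V whose restrictions to Ω are not equal and all t ∈ (0,1), E(t u₁ + (1−t) u₂) < t E(u₁) + (1−t) E(u₂). -/

import Mathlib

/-! The gradient term of the energy is convex in `u`, since `∇` is linear and `‖·‖²` is convex.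
Pointwise, the potential `u ↦ (u - w)² / (4k) + Ǧ(u; w) / (2ε²)` is strictly convex as soon as
`k ≤ 2ε²`: its derivative is strictly increasing. Hence the energy density of the convex
combination lies below the convex combination of the densities, strictly wherever `u₁ ≠ u₂`;
this happens on a nonempty open subset of `Ω`, which has positive measure. -/

open MeasureTheory Set

/-- The secant potential `Ǧ(u; w)` of the modified Crank–Nicolson scheme. -/
noncomputable def Gcheck (u w : ℝ) : ℝ :=
  1 / 4 * (1 / 4 * u ^ 4 + w / 3 * u ^ 3 + w ^ 2 / 2 * u ^ 2 + w ^ 3 * u)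
    - (1 / 4 * u ^ 2 + 1 / 2 * u * w)

-- `Ǧ(·; w)` is an antiderivative of the secant slope `(F u - F w) / (u - w)`.
lemma hasDerivAt_Gcheck (u w : ℝ) :
    HasDerivAt (Gcheck · w) ((u ^ 3 + w * u ^ 2 + w ^ 2 * u + w ^ 3) / 4 - (u + w) / 2) u := by
  have h := hasDerivAt_id' (x := u)
  refine ((((((h.pow 4).const_mul (1 / 4)).add ((h.pow 3).const_mul (w / 3))).add
    ((h.pow 2).const_mul (w ^ 2 / 2))).add (h.const_mul (w ^ 3))).const_mul (1 / 4) |>.sub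
    (((h.pow 2).const_mul (1 / 4)).add ((h.const_mul (1 / 2)).mul_const w))).congr_deriv ?_
  norm_num; ring

lemma strictConvexOn_sq_sub_add_Gcheck {a b : ℝ} (w : ℝ) (hb : 0 < b) (hab : b ≤ 4 * a) :
    StrictConvexOn ℝ univ (fun u => a * (u - w) ^ 2 + b * Gcheck u w) := by
  have hderiv : ∀ u, HasDerivAt (fun u => a * (u - w) ^ 2 + b * Gcheck u w)
      (2 * a * (u - w) + b * ((u ^ 3 + w * u ^ 2 + w ^ 2 * u + w ^ 3) / 4 - (u + w) / 2)) u :=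
    fun u => (((((hasDerivAt_id' (x := u)).sub_const w).pow 2).const_mul a).add
      ((hasDerivAt_Gcheck u w).const_mul b)).congr_deriv (by norm_num; ring)
  refine StrictMono.strictConvexOn_univ_of_deriv
    (continuous_iff_continuousAt.2 fun u => (hderiv u).continuousAt) fun x y hxy => ?_
  rw [(hderiv x).deriv, (hderiv y).deriv]
  have hsq : 0 < (x + y) ^ 2 + (x + w) ^ 2 + (y + w) ^ 2 := by
    rcases eq_or_ne (x + y) 0 with h | h
    · have : x + w ≠ 0 ∨ y + w ≠ 0 := by by_contra! h'; linarith
      rcases this with h' | h' <;> positivity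
    · positivity
  -- `f' y - f' x = (y - x) ((4a - b) / 2 + b / 8 ((x + y)² + (x + w)² + (y + w)²))`
  nlinarith [mul_pos (sub_pos.2 hxy) (mul_pos hb hsq),
    mul_nonneg (sub_pos.2 hxy).le (sub_nonneg.2 hab)]

noncomputable def crankNicolsonPotential (k ε w u : ℝ) : ℝ :=
  1 / (4 * k) * (u - w) ^ 2 + 1 / (2 * ε ^ 2) * Gcheck u w

lemma strictConvexOn_crankNicolsonPotential {k ε : ℝ} (hε : 0 < ε) (hk0 : 0 < k)
    (hk : k ≤ 2 * ε ^ 2) (w : ℝ) : StrictConvexOn ℝ univ (crankNicolsonPotential k ε w) := by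
  refine strictConvexOn_sq_sub_add_Gcheck w (by positivity) ?_
  rw [show 4 * (1 / (4 * k)) = 1 / k by field_simp]
  exact one_div_le_one_div_of_le hk0 hk

lemma setIntegral_lt_setIntegral_of_continuousOn {X : Type*} [TopologicalSpace X]
    [MeasurableSpace X] [OpensMeasurableSpace X] {μ : Measure X} [μ.IsOpenPosMeasure]
    {s : Set X} {f g : X → ℝ} (hs : IsOpen s) (hf : IntegrableOn f s μ)
    (hg : IntegrableOn g s μ) (hfc : ContinuousOn f s) (hgc : ContinuousOn g s)
    (hle : ∀ x ∈ s, f x ≤ g x) (hlt : ∃ x ∈ s, f x < g x) :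
    ∫ x in s, f x ∂μ < ∫ x in s, g x ∂μ := by
  obtain ⟨x₀, hx₀s, hx₀⟩ := hlt
  have hpos : 0 < μ (s ∩ (g - f) ⁻¹' Ioi 0) :=
    ((hgc.sub hfc).isOpen_inter_preimage hs isOpen_Ioi).measure_pos μ
      ⟨x₀, hx₀s, sub_pos.2 hx₀⟩
  rw [← sub_pos, ← integral_sub hg hf, setIntegral_pos_iff_support_of_nonneg_ae
    (ae_restrict_of_forall_mem hs.measurableSet fun x hx => sub_nonneg.2 (hle x hx)) (hg.sub hf)]
  refine hpos.trans_le (measure_mono fun x ⟨hxs, hx⟩ => ⟨?_, hxs⟩)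
  exact (ne_of_lt hx).symm

lemma Continuous.integrableOn_of_isBounded {X E : Type*} [MetricSpace X] [ProperSpace X]
    [MeasurableSpace X] [OpensMeasurableSpace X] {μ : Measure X} [IsFiniteMeasureOnCompacts μ]
    [NormedAddCommGroup E] {f : X → E} (hf : Continuous f) {s : Set X}
    (hs : Bornology.IsBounded s) : IntegrableOn f s μ :=
  (hf.continuousOn.integrableOn_compact hs.isCompact_closure).mono_set subset_closure

section EnergyDensity

variable {F : Type*} [NormedAddCommGroup F] [InnerProductSpace ℝ F] [CompleteSpace F]

lemma ContDiff.continuous_gradient {u : F → ℝ} (hu : ContDiff ℝ 1 u) : Continuous (gradient u) :=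
  (InnerProductSpace.toDual ℝ F).symm.continuous.comp (hu.continuous_fderiv one_ne_zero)

lemma gradient_linear_comb {u₁ u₂ : F → ℝ} {x : F} (hu₁ : DifferentiableAt ℝ u₁ x)
    (hu₂ : DifferentiableAt ℝ u₂ x) (a b : ℝ) :
    gradient (fun y => a * u₁ y + b * u₂ y) x = a • gradient u₁ x + b • gradient u₂ x := by
  simp only [gradient, fderiv_fun_add (hu₁.const_mul a) (hu₂.const_mul b),
    fderiv_const_mul hu₁, fderiv_const_mul hu₂, map_add, map_smul]

lemma norm_half_gradient_linear_comb_sq_le {u₁ u₂ : F → ℝ} {x : F}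
    (hu₁ : DifferentiableAt ℝ u₁ x) (hu₂ : DifferentiableAt ℝ u₂ x) (g : F) {t : ℝ}
    (ht0 : 0 ≤ t) (ht1 : t ≤ 1) :
    ‖(1 / 2 : ℝ) • (gradient (fun y => t * u₁ y + (1 - t) * u₂ y) x + g)‖ ^ 2 ≤
      t * ‖(1 / 2 : ℝ) • (gradient u₁ x + g)‖ ^ 2
        + (1 - t) * ‖(1 / 2 : ℝ) • (gradient u₂ x + g)‖ ^ 2 := by
  have hcomb : (1 / 2 : ℝ) • (gradient (fun y => t * u₁ y + (1 - t) * u₂ y) x + g) =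
      t • ((1 / 2 : ℝ) • (gradient u₁ x + g))
        + (1 - t) • ((1 / 2 : ℝ) • (gradient u₂ x + g)) := by
    rw [gradient_linear_comb hu₁ hu₂]; module
  rw [hcomb]
  exact (convexOn_univ_norm.pow (fun _ _ => norm_nonneg _) 2).2 (mem_univ _) (mem_univ _)
    ht0 (sub_nonneg.2 ht1) (add_sub_cancel t 1)

noncomputable def crankNicolsonEnergyDensity (k ε : ℝ) (w u : F → ℝ) (x : F) : ℝ :=
  1 / 2 * ‖(1 / 2 : ℝ) • (gradient u x + gradient w x)‖ ^ 2 + crankNicolsonPotential k ε (w x) (u x)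

lemma crankNicolsonEnergyDensity_linear_comb_le {k ε : ℝ} (hε : 0 < ε) (hk0 : 0 < k)
    (hk : k ≤ 2 * ε ^ 2) (w : F → ℝ) {u₁ u₂ : F → ℝ} {x : F}
    (hu₁ : DifferentiableAt ℝ u₁ x) (hu₂ : DifferentiableAt ℝ u₂ x) {t : ℝ}
    (ht0 : 0 ≤ t) (ht1 : t ≤ 1) :
    crankNicolsonEnergyDensity k ε w (fun y => t * u₁ y + (1 - t) * u₂ y) x ≤
      t * crankNicolsonEnergyDensity k ε w u₁ x
        + (1 - t) * crankNicolsonEnergyDensity k ε w u₂ x := by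
  have hgrad := norm_half_gradient_linear_comb_sq_le hu₁ hu₂ (gradient w x) ht0 ht1
  have hpot := (strictConvexOn_crankNicolsonPotential hε hk0 hk (w x)).convexOn.2 (mem_univ (u₁ x))
    (mem_univ (u₂ x)) ht0 (sub_nonneg.2 ht1) (add_sub_cancel t 1)
  simp only [crankNicolsonEnergyDensity, smul_eq_mul] at hpot ⊢
  linarith

lemma crankNicolsonEnergyDensity_linear_comb_lt {k ε : ℝ} (hε : 0 < ε) (hk0 : 0 < k)
    (hk : k ≤ 2 * ε ^ 2) (w : F → ℝ) {u₁ u₂ : F → ℝ} {x : F}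
    (hu₁ : DifferentiableAt ℝ u₁ x) (hu₂ : DifferentiableAt ℝ u₂ x) (hx : u₁ x ≠ u₂ x)
    {t : ℝ} (ht : t ∈ Ioo (0 : ℝ) 1) :
    crankNicolsonEnergyDensity k ε w (fun y => t * u₁ y + (1 - t) * u₂ y) x <
      t * crankNicolsonEnergyDensity k ε w u₁ x
        + (1 - t) * crankNicolsonEnergyDensity k ε w u₂ x := by
  have hgrad := norm_half_gradient_linear_comb_sq_le hu₁ hu₂ (gradient w x) ht.1.le ht.2.le
  have hpot := (strictConvexOn_crankNicolsonPotential hε hk0 hk (w x)).2 (mem_univ (u₁ x))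
    (mem_univ (u₂ x)) hx ht.1 (sub_pos.2 ht.2) (add_sub_cancel t 1)
  simp only [crankNicolsonEnergyDensity, smul_eq_mul] at hpot ⊢
  linarith

lemma ContDiff.continuous_crankNicolsonEnergyDensity {u w : F → ℝ} (hu : ContDiff ℝ 1 u)
    (hw : ContDiff ℝ 1 w) (k ε : ℝ) : Continuous (crankNicolsonEnergyDensity k ε w u) := by
  have := hu.continuous_gradient
  have := hw.continuous_gradient
  have := hu.continuous
  have := hw.continuous
  unfold crankNicolsonEnergyDensity crankNicolsonPotential Gcheck
  fun_prop

variable [FiniteDimensional ℝ F] [MeasurableSpace F] [BorelSpace F] {μ : Measure F}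
  [IsFiniteMeasureOnCompacts μ]

lemma integral_crankNicolsonEnergyDensity {u w : F → ℝ} (hu : ContDiff ℝ 1 u) (hw : ContDiff ℝ 1 w)
    {Ω : Set F} (hΩ : Bornology.IsBounded Ω) (k ε : ℝ) :
    ∫ x in Ω, crankNicolsonEnergyDensity k ε w u x ∂μ =
      1 / 2 * (∫ x in Ω, ‖(1 / 2 : ℝ) • (gradient u x + gradient w x)‖ ^ 2 ∂μ)
      + 1 / (4 * k) * (∫ x in Ω, (u x - w x) ^ 2 ∂μ)
      + 1 / (2 * ε ^ 2) * (∫ x in Ω, Gcheck (u x) (w x) ∂μ) := by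
  have hint {f : F → ℝ} (hf : Continuous f) : IntegrableOn f Ω μ :=
    hf.integrableOn_of_isBounded hΩ
  have := hu.continuous_gradient
  have := hw.continuous_gradient
  have := hu.continuous
  have := hw.continuous
  have hgrad : IntegrableOn (fun x => ‖(1 / 2 : ℝ) • (gradient u x + gradient w x)‖ ^ 2) Ω μ :=
    hint (by fun_prop)
  have hsq : IntegrableOn (fun x => (u x - w x) ^ 2) Ω μ := hint (by fun_prop)
  have hG : IntegrableOn (fun x => Gcheck (u x) (w x)) Ω μ := hint (by unfold Gcheck; fun_prop)
  simp only [crankNicolsonEnergyDensity, crankNicolsonPotential]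
  rw [integral_add (hgrad.const_mul _) ?_, integral_add (hsq.const_mul _) (hG.const_mul _),
    integral_const_mul, integral_const_mul, integral_const_mul, add_assoc]
  exact (hsq.const_mul _).add (hG.const_mul _)

end EnergyDensity

theorem stmt_15_general (d : ℕ)
    (Ω : Set (EuclideanSpace ℝ (Fin d)))
    (hΩbd : Bornology.IsBounded Ω) (hΩop : IsOpen Ω)
    (ε k : ℝ) (hε : 0 < ε) (hk0 : 0 < k) (hk : k ≤ 2 * ε ^ 2)
    (w : EuclideanSpace ℝ (Fin d) → ℝ) (hw : ContDiff ℝ 1 w)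
    (E : (EuclideanSpace ℝ (Fin d) → ℝ) → ℝ)
    (hE : ∀ u, E u =
      1 / 2 * (∫ x in Ω, ‖(1 / 2 : ℝ) • (gradient u x + gradient w x)‖ ^ 2)
      + 1 / (4 * k) * (∫ x in Ω, (u x - w x) ^ 2)
      + 1 / (2 * ε ^ 2) * (∫ x in Ω, Gcheck (u x) (w x)))
    (u₁ u₂ : EuclideanSpace ℝ (Fin d) → ℝ)
    (hu₁ : ContDiff ℝ 1 u₁) (hu₂ : ContDiff ℝ 1 u₂)
    (hne : ¬ Set.EqOn u₁ u₂ Ω)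
    (t : ℝ) (ht : t ∈ Set.Ioo (0 : ℝ) 1) :
    E (fun x => t * u₁ x + (1 - t) * u₂ x) < t * E u₁ + (1 - t) * E u₂ := by
  obtain ⟨x₀, hx₀Ω, hx₀⟩ : ∃ x ∈ Ω, u₁ x ≠ u₂ x := by simpa [EqOn] using hne
  have hv : ContDiff ℝ 1 fun x => t * u₁ x + (1 - t) * u₂ x :=
    (contDiff_const.mul hu₁).add (contDiff_const.mul hu₂)
  set e := crankNicolsonEnergyDensity k ε w
  have hcont {u : EuclideanSpace ℝ (Fin d) → ℝ} (hu : ContDiff ℝ 1 u) : Continuous (e u) :=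
    hu.continuous_crankNicolsonEnergyDensity hw k ε
  have hint {u : EuclideanSpace ℝ (Fin d) → ℝ} (hu : ContDiff ℝ 1 u) : IntegrableOn (e u) Ω :=
    (hcont hu).integrableOn_of_isBounded hΩbd
  have hdiff {u : EuclideanSpace ℝ (Fin d) → ℝ} (hu : ContDiff ℝ 1 u) (x) :
      DifferentiableAt ℝ u x :=
    hu.differentiable one_ne_zero x
  rw [hE, hE, hE, ← integral_crankNicolsonEnergyDensity hv hw hΩbd,
    ← integral_crankNicolsonEnergyDensity hu₁ hw hΩbd,
    ← integral_crankNicolsonEnergyDensity hu₂ hw hΩbd]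
  calc _ < ∫ x in Ω, t * e u₁ x + (1 - t) * e u₂ x :=
        setIntegral_lt_setIntegral_of_continuousOn hΩop (hint hv)
          (((hint hu₁).const_mul t).add ((hint hu₂).const_mul (1 - t)))
          (hcont hv).continuousOn
          ((continuous_const.mul (hcont hu₁)).add (continuous_const.mul (hcont hu₂))).continuousOn
          (fun x _ => crankNicolsonEnergyDensity_linear_comb_le hε hk0 hk w
            (hdiff hu₁ x) (hdiff hu₂ x) ht.1.le ht.2.le)
          ⟨x₀, hx₀Ω, crankNicolsonEnergyDensity_linear_comb_lt hε hk0 hk w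
            (hdiff hu₁ x₀) (hdiff hu₂ x₀) hx₀ ht⟩
    _ = _ := by
      rw [integral_add ((hint hu₁).const_mul t) ((hint hu₂).const_mul (1 - t)),
        integral_const_mul, integral_const_mul]

/-- Convexity part of Theorem 4.3: the modified Crank–Nicolson discrete energy for
the Allen–Cahn equation is strictly convex when `0 < k ≤ 2ε²`. -/
theorem stmt_15 (d : ℕ) (hd : 1 ≤ d)
    (Ω : Set (EuclideanSpace ℝ (Fin d))) (hΩne : Ω.Nonempty)
    (hΩbd : Bornology.IsBounded Ω) (hΩop : IsOpen Ω)
    (ε k : ℝ) (hε : 0 < ε) (hk0 : 0 < k) (hk : k ≤ 2 * ε ^ 2)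
    (w : EuclideanSpace ℝ (Fin d) → ℝ) (hw : ContDiff ℝ 1 w)
    (E : (EuclideanSpace ℝ (Fin d) → ℝ) → ℝ)
    (hE : ∀ u, E u =
      1 / 2 * (∫ x in Ω, ‖(1 / 2 : ℝ) • (gradient u x + gradient w x)‖ ^ 2)
      + 1 / (4 * k) * (∫ x in Ω, (u x - w x) ^ 2)
      + 1 / (2 * ε ^ 2) * (∫ x in Ω, Gcheck (u x) (w x)))
    (u₁ u₂ : EuclideanSpace ℝ (Fin d) → ℝ)
    (hu₁ : ContDiff ℝ 1 u₁) (hu₂ : ContDiff ℝ 1 u₂)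
    (hne : ¬ Set.EqOn u₁ u₂ Ω)
    (t : ℝ) (ht : t ∈ Set.Ioo (0 : ℝ) 1) :
    E (fun x => t * u₁ x + (1 - t) * u₂ x) < t * E u₁ + (1 - t) * E u₂ :=
  stmt_15_general d Ω hΩbd hΩop ε k hε hk0 hk w hw E hE u₁ u₂ hu₁ hu₂ hne t ht
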